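/- A promises profile (r,s) ∈ P² is stable if and only if for every coalition C ⊆ I with |C| ≥ ĸ̂ one has ∑_{i∈C} (u_i + r_i) ≥ ∑_{i∈C} s_i. -/

import Mathlib

open Finset

/-- The committee enacts the reform: at least `κ` members vote for it,
where member `i` votes for the reform iff `u i + r i ≥ s i`. -/
def Enacts {I : ℕ} (κ : ℕ) (u r s : Fin I → ℝ) : Prop :=
  κ ≤ (Finset.univ.filter (fun i => s i ≤ u i + r i)).card

/-- Coalition `C` blocks the promises profile `(r, s)`. -/
def Blocks {I : ℕ} (κ : ℕ) (u r s : Fin I → ℝ) (C : Finset (Fin I)) : Prop :=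
  (Enacts κ u r s ∧ ∃ s' : Fin I → ℝ, (∑ i, s' i = 0) ∧ (∀ i, s' i ≠ s i ↔ i ∈ C) ∧
      ¬ Enacts κ u r s' ∧ ∀ i ∈ C, u i + r i < s' i) ∨
  (¬ Enacts κ u r s ∧ ∃ r' : Fin I → ℝ, (∑ i, r' i = 0) ∧ (∀ i, r' i ≠ r i ↔ i ∈ C) ∧
      Enacts κ u r' s ∧ ∀ i ∈ C, s i < u i + r' i)

/-- The profile `(r, s)` is stable: no blocking coalition exists. -/
def StableProfile {I : ℕ} (κ : ℕ) (u r s : Fin I → ℝ) : Prop :=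
  ∀ C : Finset (Fin I), ¬ Blocks κ u r s C

/-!
If every coalition of at least `ĸ̂ = I - κ + 1` members is, on aggregate, weakly for the reform,
then the reform passes (its opponents would form such a coalition), and no coalition `C` can defeat
it: the opponents `D` after the deviation number at least `ĸ̂` and contain `C`; since only the
promises of `C` move and their total is kept, `∑_D s` is unchanged, yet every member of `D` is now
strictly against. Conversely, a coalition `C` with `|C| ≥ ĸ̂` and `∑_C (u + r) < ∑_C s` can
redistribute its promises so that every member is strictly against; and if the reform failed, the
grand coalition could pass it, because `∑ u > 0` leaves room to make everyone strictly for. With at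
least two members, the redistribution can also avoid every old promise, so that exactly the
members' promises change; a singleton coalition is ruled out by counting votes.
-/

theorem exists_pos_ne_sum_eq {ι : Type*} {C : Finset ι} (hC : 2 ≤ #C) {T : ℝ} (hT : 0 < T)
    (t : ι → ℝ) : ∃ δ : ι → ℝ, (∀ i ∈ C, 0 < δ i ∧ δ i ≠ t i) ∧ ∑ i ∈ C, δ i = T := by
  classical
  obtain ⟨a, ha⟩ := card_pos.mp (by omega : 0 < #C)
  have hn : (2 : ℝ) ≤ #C := by exact_mod_cast hC
  -- `δ` is `ε` off `a`; the bad values of `ε` are the `t i` and the one making `δ a = t a`.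
  obtain ⟨ε, ⟨hε, hεT⟩, hεbad⟩ :=
    (Set.Ioo_infinite (div_pos hT (by linarith : (0 : ℝ) < #C))).exists_notMem_finset
      (insert ((T - t a) / (#C - 1)) (C.image t))
  simp only [mem_insert, mem_image, not_or, not_exists, not_and] at hεbad
  have hnε : #C * ε < T := by rwa [lt_div_iff₀ (by linarith), mul_comm] at hεT
  refine ⟨fun i => ε + if i = a then T - #C * ε else 0, fun i hi => ?_, ?_⟩
  · by_cases hia : i = a
    · subst hia
      simp only [if_true]
      refine ⟨by linarith, fun h => hεbad.1 ?_⟩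
      rw [eq_div_iff (by linarith)]
      linarith
    · simp only [if_neg hia, add_zero]
      exact ⟨hε, fun h => hεbad.2 i hi h.symm⟩
  · rw [sum_add_distrib, sum_const, sum_ite_eq', if_pos ha, nsmul_eq_mul]
    ring

theorem exists_lt_ne_sum_eq {ι : Type*} {C : Finset ι} (hC : 2 ≤ #C) (a b : ι → ℝ) {T : ℝ}
    (hT : ∑ i ∈ C, a i < T) :
    ∃ x : ι → ℝ, (∀ i ∈ C, a i < x i ∧ x i ≠ b i) ∧ ∑ i ∈ C, x i = T := by
  obtain ⟨δ, hδ, hδsum⟩ := exists_pos_ne_sum_eq hC (sub_pos.2 hT) (b - a)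
  refine ⟨fun i => a i + δ i, fun i hi => ?_, by rw [sum_add_distrib, hδsum]; ring⟩
  obtain ⟨hpos, hne⟩ := hδ i hi
  refine ⟨by simpa using hpos, fun h => hne ?_⟩
  simp [← h]

theorem Finset.sum_eq_sum_of_eqOn_compl {ι M : Type*} [Fintype ι] [AddCancelCommMonoid M]
    {D : Finset ι} {f g : ι → M} (hfg : Set.EqOn f g (↑D)ᶜ) (hsum : ∑ i, f i = ∑ i, g i) :
    ∑ i ∈ D, f i = ∑ i ∈ D, g i := by
  classical
  have hcompl : ∑ i ∈ Dᶜ, f i = ∑ i ∈ Dᶜ, g i :=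
    sum_congr rfl fun i hi => hfg (by simpa using hi)
  rw [← sum_add_sum_compl D f, ← sum_add_sum_compl D g, hcompl] at hsum
  exact add_right_cancel hsum

section Committee

variable {I κ : ℕ} {u r s : Fin I → ℝ}

theorem enacts_of_forall_le (hκI : κ ≤ I) (h : ∀ i, s i ≤ u i + r i) : Enacts κ u r s := by
  simpa [Enacts, filter_true_of_mem fun i _ => h i] using hκI

theorem not_enacts_of_forall_lt {C : Finset (Fin I)} (hC : I - κ + 1 ≤ #C)
    (h : ∀ i ∈ C, u i + r i < s i) : ¬ Enacts κ u r s := by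
  intro hEn
  have hsub : univ.filter (fun i => s i ≤ u i + r i) ⊆ Cᶜ := fun i hi =>
    mem_compl.2 fun hiC => (h i hiC).not_ge (mem_filter.1 hi).2
  have hfor := card_le_card hsub
  have hCI := card_le_univ C
  rw [card_compl, Fintype.card_fin] at hfor
  rw [Fintype.card_fin] at hCI
  unfold Enacts at hEn
  omega

theorem card_filter_lt_of_not_enacts (hκI : κ ≤ I) (h : ¬ Enacts κ u r s) :
    I - κ + 1 ≤ #(univ.filter fun i => u i + r i < s i) := by
  have := card_filter_add_card_filter_not (s := univ) (fun i => s i ≤ u i + r i)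
  simp only [not_le, card_univ, Fintype.card_fin] at this
  unfold Enacts at h
  omega

theorem enacts_of_forall_sum_le (hκI : κ ≤ I)
    (h : ∀ C : Finset (Fin I), I - κ + 1 ≤ #C → ∑ i ∈ C, s i ≤ ∑ i ∈ C, (u i + r i)) :
    Enacts κ u r s := by
  by_contra hn
  have hF := card_filter_lt_of_not_enacts hκI hn
  exact (h _ hF).not_gt
    (sum_lt_sum_of_nonempty (card_pos.1 (by omega)) fun i hi => (mem_filter.1 hi).2)

theorem not_blocks_of_forall_sum_le (hκI : κ ≤ I) (hs : ∑ i, s i = 0)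
    (h : ∀ C : Finset (Fin I), I - κ + 1 ≤ #C → ∑ i ∈ C, s i ≤ ∑ i ∈ C, (u i + r i))
    (C : Finset (Fin I)) : ¬ Blocks κ u r s C := by
  rintro (⟨-, s', hs', hchanged, hn, hC⟩ | ⟨hn, -⟩)
  · have hD := card_filter_lt_of_not_enacts hκI hn
    set D := univ.filter fun i => u i + r i < s' i
    have hsD : ∑ i ∈ D, s' i = ∑ i ∈ D, s i := by
      refine sum_eq_sum_of_eqOn_compl (fun i hiD => ?_) (hs'.trans hs.symm)
      by_contra hne
      exact hiD (mem_filter.2 ⟨mem_univ i, hC i ((hchanged i).1 hne)⟩)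
    have hlt : ∑ i ∈ D, (u i + r i) < ∑ i ∈ D, s' i :=
      sum_lt_sum_of_nonempty (card_pos.1 (by omega : 0 < #D)) fun i hi => (mem_filter.1 hi).2
    linarith [h D hD]
  · exact hn (enacts_of_forall_sum_le hκI h)

theorem blocks_of_sum_lt (hs : ∑ i, s i = 0) (hEn : Enacts κ u r s) {C : Finset (Fin I)}
    (hC : I - κ + 1 ≤ #C) (hC2 : 2 ≤ #C) (hlt : ∑ i ∈ C, (u i + r i) < ∑ i ∈ C, s i) :
    Blocks κ u r s C := by
  obtain ⟨x, hx, hxsum⟩ := exists_lt_ne_sum_eq hC2 (fun i => u i + r i) s hlt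
  have hlt' : ∀ i ∈ C, u i + r i < C.piecewise x s i := fun i hi => by
    simpa [piecewise_eq_of_mem _ _ _ hi] using (hx i hi).1
  refine Or.inl ⟨hEn, C.piecewise x s, ?_, fun i => ?_, not_enacts_of_forall_lt hC hlt', hlt'⟩
  · rw [sum_piecewise, univ_inter, hxsum, ← compl_eq_univ_sdiff, sum_add_sum_compl, hs]
  · by_cases hi : i ∈ C <;> simp [hi, (hx i _).2]

theorem blocks_univ_of_not_enacts (hκI : κ ≤ I) (hI : 2 ≤ I) (hu : 0 < ∑ i, u i)
    (hs : ∑ i, s i = 0) (hn : ¬ Enacts κ u r s) : Blocks κ u r s univ := by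
  obtain ⟨x, hx, hxsum⟩ := exists_lt_ne_sum_eq (C := univ) (by simpa using hI) (s - u) r
    (T := 0) (by simpa [sum_sub_distrib, hs] using hu)
  have hlt : ∀ i, s i < u i + x i := fun i => by
    linarith [show s i - u i < x i by simpa using (hx i (mem_univ i)).1]
  exact Or.inr ⟨hn, x, hxsum, fun i => by simp [(hx i (mem_univ i)).2],
    enacts_of_forall_le hκI fun i => (hlt i).le, fun i _ => hlt i⟩

theorem enacts_of_stable (hκI : κ ≤ I) (hu : 0 < ∑ i, u i) (hr : ∑ i, r i = 0)
    (hs : ∑ i, s i = 0) (hstab : StableProfile κ u r s) : Enacts κ u r s := by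
  have hI : I ≠ 0 := by rintro rfl; simp at hu
  obtain rfl | hI2 : I = 1 ∨ 2 ≤ I := by omega
  · exact enacts_of_forall_le hκI fun i => by fin_cases i; simp at hu hr hs ⊢; linarith
  · by_contra hn
    exact hstab univ (blocks_univ_of_not_enacts hκI hI2 hu hs hn)

end Committee

theorem stable_characterization_general {I : ℕ} (κ : ℕ) (hκI : κ ≤ I)
    (u : Fin I → ℝ) (hu : 0 < ∑ i, u i)
    (r s : Fin I → ℝ) (hr : ∑ i, r i = 0) (hs : ∑ i, s i = 0) :
    StableProfile κ u r s ↔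
      ∀ C : Finset (Fin I), I - κ + 1 ≤ C.card → ∑ i ∈ C, s i ≤ ∑ i ∈ C, (u i + r i) := by
  refine ⟨fun hstab C hC => ?_, fun h C => not_blocks_of_forall_sum_le hκI hs h C⟩
  have hEn := enacts_of_stable hκI hu hr hs hstab
  by_contra! hlt
  obtain hC1 | hC2 : #C = 1 ∨ 2 ≤ #C := by omega
  · obtain ⟨i, rfl⟩ := card_eq_one.1 hC1
    exact not_enacts_of_forall_lt hC (by simpa using hlt) hEn
  · exact hstab C (blocks_of_sum_lt hs hEn hC hC2 hlt)

/-- `(r,s) ∈ P²` is stable iff for every coalition `C` with `|C| ≥ ĸ̂ = I - κ + 1`,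
`∑_{i∈C} (u_i + r_i) ≥ ∑_{i∈C} s_i`. -/
theorem stable_characterization {I : ℕ} (κ : ℕ) (hκ : 1 ≤ κ) (hκI : κ ≤ I)
    (u : Fin I → ℝ) (hmono : Monotone u) (hu : 0 < ∑ i, u i)
    (r s : Fin I → ℝ) (hr : ∑ i, r i = 0) (hs : ∑ i, s i = 0) :
    StableProfile κ u r s ↔
      ∀ C : Finset (Fin I), I - κ + 1 ≤ C.card → ∑ i ∈ C, s i ≤ ∑ i ∈ C, (u i + r i) :=
  stable_characterization_general κ hκI u hu r s hr hs
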